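/- arXiv:1204.2723 — 2 statements merged into one kernel-verified Lean document; each statement's English description precedes it below -/
import Mathlib

section
/- Let n ≥ 1 and k ≥ 2, and let q be a monic real polynomial of degree k satisfying 𝔅̄ₙq(x) = η_k^{(n)} q(x) for all x ∈ [0,1], where η_k^{(n)} = (n−1)!·n^k/(n+k−1)!. Then the coefficient of x^{k−1} in q equals −k/2. -/
/-!
On monomials the Beta operator acts through the moments of the Beta distribution:
`𝔅̄ₙ(tʲ)(x) = B(nx + j, n(1 - x)) / B(nx, n(1 - x)) = (nx)ⱼ / (n)ⱼ`, with `(·)ⱼ` the rising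
factorial (`ascPochhammer`). This is a polynomial in `x` with leading coefficient `nʲ / (n)ⱼ` and
next coefficient `nʲ⁻¹ · C(j, 2) / (n)ⱼ`, so the eigen-equation is a polynomial identity. Since
`η_k = nᵏ / (n)ₖ` and `(n)ₖ = (n)ₖ₋₁ (n + k - 1)`, comparing coefficients of `xᵏ⁻¹` gives
`(k - 1)(2 c + k) = 0` for `c` the coefficient of `xᵏ⁻¹` in `q`.
-/

open MeasureTheory Finset Polynomial

/-- The Beta operator of Mühlbach and Lupaş on `C[0,1]`. -/
noncomputable def betaOp (n : ℕ) (f : ℝ → ℝ) (x : ℝ) : ℝ :=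
  if x = 0 then f 0
  else if x = 1 then f 1
  else (∫ t in (0:ℝ)..1, t ^ ((n:ℝ) * x - 1) * (1 - t) ^ ((n:ℝ) * (1 - x) - 1) * f t) /
       (∫ t in (0:ℝ)..1, t ^ ((n:ℝ) * x - 1) * (1 - t) ^ ((n:ℝ) * (1 - x) - 1))

theorem Complex.betaIntegral_ofReal (a b : ℝ) :
    Complex.betaIntegral a b = ↑(∫ t in (0:ℝ)..1, t ^ (a - 1) * (1 - t) ^ (b - 1)) := by
  rw [Complex.betaIntegral, ← intervalIntegral.integral_ofReal]
  refine intervalIntegral.integral_congr fun t ht => ?_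
  rw [Set.uIcc_of_le zero_le_one] at ht
  simp [Complex.ofReal_cpow ht.1, Complex.ofReal_cpow (sub_nonneg.2 ht.2)]

namespace ProbabilityTheory

theorem integral_rpow_mul_one_sub_rpow_eq_beta {a b : ℝ} (ha : 0 < a) (hb : 0 < b) :
    ∫ t in (0:ℝ)..1, t ^ (a - 1) * (1 - t) ^ (b - 1) = beta a b := by
  rw [beta_eq_betaIntegralReal a b ha hb, Complex.betaIntegral_ofReal, Complex.ofReal_re]

theorem intervalIntegrable_rpow_mul_one_sub_rpow {a b : ℝ} (ha : 0 < a) (hb : 0 < b) :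
    IntervalIntegrable (fun t : ℝ => t ^ (a - 1) * (1 - t) ^ (b - 1)) volume 0 1 :=
  intervalIntegral.intervalIntegrable_of_integral_ne_zero <|
    (integral_rpow_mul_one_sub_rpow_eq_beta ha hb).trans_ne (beta_pos ha hb).ne'

theorem _root_.Real.Gamma_add_nat {a : ℝ} (ha : 0 < a) (j : ℕ) :
    Real.Gamma (a + j) = (ascPochhammer ℝ j).eval a * Real.Gamma a := by
  induction j with
  | zero => simp
  | succ j ih =>
    rw [Nat.cast_succ, ← add_assoc, Real.Gamma_add_one (by positivity), ih,
      ascPochhammer_succ_eval]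
    ring

theorem beta_add_nat {a b : ℝ} (ha : 0 < a) (hb : 0 < b) (j : ℕ) :
    beta (a + j) b = (ascPochhammer ℝ j).eval a / (ascPochhammer ℝ j).eval (a + b) * beta a b := by
  have := (ascPochhammer_pos j (a + b) (by positivity)).ne'
  have := (Real.Gamma_pos_of_pos (add_pos ha hb)).ne'
  simp only [beta, add_right_comm a (j : ℝ) b, Real.Gamma_add_nat ha,
    Real.Gamma_add_nat (add_pos ha hb)]
  field_simp

end ProbabilityTheory

open ProbabilityTheory

theorem betaOp_polynomial_eq_sum {n : ℕ} (hn : 0 < n) (q : ℝ[X]) {x : ℝ}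
    (hx0 : 0 < x) (hx1 : x < 1) :
    betaOp n (fun t => q.eval t) x = ∑ j ∈ range (q.natDegree + 1),
      q.coeff j * ((ascPochhammer ℝ j).eval (n * x) / (ascPochhammer ℝ j).eval (n : ℝ)) := by
  have ha : 0 < (n : ℝ) * x := by positivity
  have hb : 0 < (n : ℝ) * (1 - x) := mul_pos (by positivity) (by linarith)
  have hab : (n : ℝ) * x + n * (1 - x) = n := by ring
  have hnum : ∫ t in (0:ℝ)..1, t ^ ((n : ℝ) * x - 1) * (1 - t) ^ ((n : ℝ) * (1 - x) - 1) * q.eval t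
      = ∑ j ∈ range (q.natDegree + 1), q.coeff j * beta (n * x + j) (n * (1 - x)) := by
    have haj (j : ℕ) : 0 < (n : ℝ) * x + j := by positivity
    simp only [← integral_rpow_mul_one_sub_rpow_eq_beta (haj _) hb,
      ← intervalIntegral.integral_const_mul]
    rw [← intervalIntegral.integral_finsetSum fun j _ =>
      (intervalIntegrable_rpow_mul_one_sub_rpow (haj j) hb).const_mul _]
    refine intervalIntegral.integral_congr_ae (Filter.Eventually.of_forall fun t ht => ?_)
    rw [Set.uIoc_of_le zero_le_one] at ht
    rw [eval_eq_sum_range, mul_sum]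
    refine sum_congr rfl fun j _ => ?_
    rw [add_sub_right_comm, Real.rpow_add ht.1, Real.rpow_natCast]
    ring
  rw [betaOp, if_neg hx0.ne', if_neg hx1.ne, hnum, integral_rpow_mul_one_sub_rpow_eq_beta ha hb,
    sum_div]
  refine sum_congr rfl fun j _ => ?_
  rw [beta_add_nat ha hb, hab, mul_div_assoc, mul_div_cancel_right₀ _ (beta_pos ha hb).ne']

theorem coeff_ascPochhammer_self {S : Type*} [Semiring S] (m : ℕ) :
    (ascPochhammer S m).coeff m = 1 := by
  rw [← ascPochhammer_map (Nat.castRingHom S), coeff_map]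
  simpa [ascPochhammer_natDegree] using
    congrArg (Nat.cast : ℕ → S) (monic_ascPochhammer ℕ m).coeff_natDegree

theorem coeff_ascPochhammer_succ {S : Type*} [Semiring S] (m : ℕ) :
    (ascPochhammer S (m + 1)).coeff m = ((m + 1).choose 2 : ℕ) := by
  induction m with
  | zero => simp
  | succ m ih =>
    rw [ascPochhammer_succ_right, mul_add, coeff_add, coeff_mul_X, ih, ← C_eq_natCast, coeff_mul_C,
      coeff_ascPochhammer_self, Nat.choose_succ_succ' (m + 1), Nat.choose_one_right]
    push_cast
    rw [one_mul, add_comm]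

theorem factorial_mul_div_factorial_eq_div_ascPochhammer {n : ℕ} (hn : 0 < n) (k : ℕ) (c : ℝ) :
    ((n - 1).factorial : ℝ) * c / (n + k - 1).factorial = c / (ascPochhammer ℝ k).eval (n : ℝ) := by
  have := (ascPochhammer_pos k (n : ℝ) (by positivity)).ne'
  rw [← Nat.factorial_mul_ascFactorial' n k hn, Nat.cast_mul, ← ascPochhammer_nat_eq_ascFactorial,
    ascPochhammer_eval_cast]
  field_simp

noncomputable def betaOpPoly (n : ℝ) (q : ℝ[X]) : ℝ[X] :=
  ∑ j ∈ range (q.natDegree + 1),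
    C (q.coeff j / (ascPochhammer ℝ j).eval n) * (ascPochhammer ℝ j).comp (C n * X)

theorem betaOp_polynomial_eq_eval_betaOpPoly {n : ℕ} (hn : 0 < n) (q : ℝ[X]) {x : ℝ}
    (hx0 : 0 < x) (hx1 : x < 1) : betaOp n (fun t => q.eval t) x = (betaOpPoly n q).eval x := by
  simp [betaOp_polynomial_eq_sum hn q hx0 hx1, betaOpPoly, eval_finsetSum, eval_comp,
    div_mul_eq_mul_div, mul_div_assoc]

theorem coeff_betaOpPoly_of_natDegree_eq_succ (n : ℝ) {q : ℝ[X]} {m : ℕ}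
    (hq : q.natDegree = m + 1) :
    (betaOpPoly n q).coeff m = n ^ m * (q.coeff m / (ascPochhammer ℝ m).eval n
      + q.coeff (m + 1) * ((m + 1).choose 2 : ℕ) / (ascPochhammer ℝ (m + 1)).eval n) := by
  have hlow : ∀ j ∈ range m, (ascPochhammer ℝ j).coeff m = 0 := fun j hj =>
    coeff_eq_zero_of_natDegree_lt <| by simpa [ascPochhammer_natDegree] using hj
  simp only [betaOpPoly, finsetSum_coeff, coeff_C_mul, comp_C_mul_X_coeff, hq]
  rw [sum_range_succ, sum_range_succ, sum_eq_zero fun j hj => by rw [hlow j hj, zero_mul, mul_zero],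
    coeff_ascPochhammer_self, coeff_ascPochhammer_succ]
  ring

/-- A monic eigenpolynomial of degree `k ≥ 2` of the Beta operator with eigenvalue
`η_k^{(n)}` has coefficient `-k/2` of `x^{k-1}`. -/
theorem betaOp_eigenpolynomial_subleading_coeff (n : ℕ) (hn : 1 ≤ n) (k : ℕ) (hk : 2 ≤ k)
    (q : Polynomial ℝ) (hmonic : q.Monic) (hdeg : q.natDegree = k)
    (heig : ∀ x ∈ Set.Icc (0:ℝ) 1,
      betaOp n (fun t => q.eval t) x =
        ((Nat.factorial (n - 1) : ℝ) * (n : ℝ) ^ k / (Nat.factorial (n + k - 1) : ℝ))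
          * q.eval x) :
    q.coeff (k - 1) = -(k : ℝ) / 2 := by
  obtain ⟨m, rfl⟩ : ∃ m, k = m + 1 := ⟨k - 1, by omega⟩
  simp only [factorial_mul_div_factorial_eq_div_ascPochhammer hn] at heig
  have hpoly : betaOpPoly n q = C (n ^ (m + 1) / (ascPochhammer ℝ (m + 1)).eval (n : ℝ)) * q := by
    refine eq_of_infinite_eval_eq _ _ ((Set.Ioo_infinite zero_lt_one).mono fun x hx => ?_)
    rw [Set.mem_ofPred_eq, ← betaOp_polynomial_eq_eval_betaOpPoly hn q hx.1 hx.2,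
      heig x (Set.Ioo_subset_Icc_self hx), eval_mul, eval_C]
  have hcoeff := congrArg (coeff · m) hpoly
  have hlead : q.coeff (m + 1) = 1 := hdeg ▸ hmonic.coeff_natDegree
  simp only [coeff_betaOpPoly_of_natDegree_eq_succ _ hdeg, coeff_C_mul, hlead,
    ascPochhammer_succ_eval, Nat.cast_choose_two] at hcoeff
  have hPm := (ascPochhammer_pos m (n : ℝ) (by positivity)).ne'
  field_simp at hcoeff
  have hm : (m : ℝ) ≠ 0 := Nat.cast_ne_zero.2 (by omega)
  have hprod : (2 * q.coeff m + (m + 1)) * m = 0 := by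
    have := mul_left_cancel₀ (pow_ne_zero m (by positivity))
      (hcoeff.trans (by ring : _ = (n : ℝ) ^ m * (q.coeff m * 2 * n)))
    push_cast at this
    linear_combination this
  rw [Nat.add_sub_cancel, Nat.cast_succ]
  linear_combination (mul_eq_zero.1 hprod).resolve_right hm / 2
end

section
/- For every n ≥ 1 and every j ≥ 0, the Beta operator maps the polynomial qⱼ(x) = (1/nʲ)·Σ_{k=0}^{j} (−1)^{j−k}·((n−1+k)!/(n−1)!)·S(j,k)·x^k to the monomial e_j, i.e. 𝔅̄ₙqⱼ(x) = xʲ for all x ∈ [0,1]. Here S(j,k) are the Stirling numbers of the second kind. (This gives the explicit formula for 𝔅̄ₙ⁻¹e_j.) -/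
/-!
The Beta operator maps `t ^ k` to `(n x)⁽ᵏ⁾ / n⁽ᵏ⁾` (rising factorials): with `a = n x` and
`b = n (1 - x)`, the `k`-th moment of the Beta weight is
`B(a + k, b) = B(a, b) a⁽ᵏ⁾ / (a + b)⁽ᵏ⁾` and `a + b = n`; at the endpoints the formula
holds trivially. Since `(n - 1 + k)! / (n - 1)! = n⁽ᵏ⁾`, linearity gives
`𝔅̄ₙ qⱼ(x) = n⁻ʲ ∑ₖ (-1) ^ (j - k) S(j, k) (n x)⁽ᵏ⁾`, which is `x ^ j` by the Stirling
expansion `y ^ j = ∑ₖ S(j, k) y₍ₖ₎` in falling factorials, taken at `y = -n x`.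
-/

open MeasureTheory Finset

/-- The Stirling numbers of the second kind. -/
def stirling2 : ℕ → ℕ → ℕ
  | 0, 0 => 1
  | 0, _ + 1 => 0
  | _ + 1, 0 => 0
  | j + 1, k + 1 => (k + 1) * stirling2 j (k + 1) + stirling2 j k

open ProbabilityTheory (beta beta_pos beta_eq_betaIntegralReal)

section Beta

lemma ofReal_rpow_mul_one_sub_rpow {t : ℝ} (ht : t ∈ Set.Icc 0 1) (a b : ℝ) :
    ((t ^ (a - 1) * (1 - t) ^ (b - 1) : ℝ) : ℂ) =
      (t : ℂ) ^ ((a : ℂ) - 1) * (1 - (t : ℂ)) ^ ((b : ℂ) - 1) := by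
  push_cast [Complex.ofReal_cpow ht.1, Complex.ofReal_cpow (sub_nonneg.2 ht.2)]
  rfl

variable {a b : ℝ}

lemma intervalIntegrable_rpow_mul_one_sub_rpow (ha : 0 < a) (hb : 0 < b) :
    IntervalIntegrable (fun t : ℝ => t ^ (a - 1) * (1 - t) ^ (b - 1)) volume 0 1 := by
  refine (Complex.betaIntegral_convergent (u := a) (v := b) (by simpa) (by simpa)).norm.congr
    fun t ht => ?_
  have ht : t ∈ Set.Icc (0:ℝ) 1 := Set.Ioc_subset_Icc_self (by simpa using ht)
  rw [← ofReal_rpow_mul_one_sub_rpow ht, Complex.norm_real, Real.norm_of_nonneg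
    (mul_nonneg (Real.rpow_nonneg ht.1 _) (Real.rpow_nonneg (sub_nonneg.2 ht.2) _))]

lemma integral_rpow_mul_one_sub_rpow (ha : 0 < a) (hb : 0 < b) :
    ∫ t in (0:ℝ)..1, t ^ (a - 1) * (1 - t) ^ (b - 1) = beta a b := by
  rw [beta_eq_betaIntegralReal a b ha hb, Complex.betaIntegral,
    intervalIntegral.integral_congr
      (g := fun t : ℝ => ((t ^ (a - 1) * (1 - t) ^ (b - 1) : ℝ) : ℂ))
      fun t ht => (ofReal_rpow_mul_one_sub_rpow (by simpa using ht) a b).symm,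
    intervalIntegral.integral_ofReal, Complex.ofReal_re]

lemma Real.Gamma_add_nat_eq_mul_ascPochhammer (ha : 0 < a) (k : ℕ) :
    Real.Gamma (a + k) = Real.Gamma a * (ascPochhammer ℝ k).eval a := by
  induction k with
  | zero => simp
  | succ k ih =>
    rw [Nat.cast_succ, ← add_assoc, Real.Gamma_add_one (by positivity), ih,
      ascPochhammer_succ_eval]
    ring

lemma ProbabilityTheory.beta_add_nat_s15 (ha : 0 < a) (hb : 0 < b) (k : ℕ) :
    beta (a + k) b =
      beta a b * (ascPochhammer ℝ k).eval a / (ascPochhammer ℝ k).eval (a + b) := by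
  have hab : 0 < a + b := add_pos ha hb
  have : (ascPochhammer ℝ k).eval (a + b) ≠ 0 := (ascPochhammer_pos k _ hab).ne'
  have : Real.Gamma (a + b) ≠ 0 := (Real.Gamma_pos_of_pos hab).ne'
  rw [beta, beta, add_right_comm,
    Real.Gamma_add_nat_eq_mul_ascPochhammer ha, Real.Gamma_add_nat_eq_mul_ascPochhammer hab]
  field_simp

lemma integral_rpow_mul_one_sub_rpow_mul_pow (ha : 0 < a) (hb : 0 < b) (k : ℕ) :
    ∫ t in (0:ℝ)..1, t ^ (a - 1) * (1 - t) ^ (b - 1) * t ^ k =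
      beta a b * (ascPochhammer ℝ k).eval a / (ascPochhammer ℝ k).eval (a + b) := by
  rw [← ProbabilityTheory.beta_add_nat_s15 ha hb, ← integral_rpow_mul_one_sub_rpow (by positivity) hb]
  refine intervalIntegral.integral_congr_ae (Filter.Eventually.of_forall fun t ht => ?_)
  rw [Set.uIoc_of_le zero_le_one] at ht
  rw [add_sub_right_comm, Real.rpow_add ht.1, Real.rpow_natCast]
  ring

end Beta

section BetaOp

variable {n : ℕ} {x : ℝ}

lemma betaOp_const_mul (c : ℝ) (f : ℝ → ℝ) :
    betaOp n (fun t => c * f t) x = c * betaOp n f x := by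
  unfold betaOp
  split_ifs
  · rfl
  · rfl
  · simp only [mul_left_comm _ c, intervalIntegral.integral_const_mul, mul_div_assoc]

lemma betaOp_finset_sum {ι : Type*} (s : Finset ι) (f : ι → ℝ → ℝ) (hn : 0 < n)
    (hx : x ∈ Set.Icc 0 1) (hf : ∀ i ∈ s, ContinuousOn (f i) (Set.Icc 0 1)) :
    betaOp n (fun t => ∑ i ∈ s, f i t) x = ∑ i ∈ s, betaOp n (f i) x := by
  unfold betaOp
  split_ifs with h0 h1
  · rfl
  · rfl
  have hx' : 0 < x ∧ x < 1 := ⟨hx.1.lt_of_ne' h0, hx.2.lt_of_ne h1⟩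
  have hw := intervalIntegrable_rpow_mul_one_sub_rpow (a := n * x) (b := n * (1 - x))
    (mul_pos (by positivity) hx'.1) (mul_pos (by positivity) (by linarith [hx'.2]))
  simp only [Finset.mul_sum, ← Finset.sum_div]
  rw [intervalIntegral.integral_finsetSum fun i hi => hw.mul_continuousOn ?_]
  rw [Set.uIcc_of_le zero_le_one]
  exact hf i hi

lemma betaOp_pow (hn : 0 < n) (hx : x ∈ Set.Icc 0 1) (k : ℕ) :
    betaOp n (fun t => t ^ k) x =
      (ascPochhammer ℝ k).eval (n * x) / (ascPochhammer ℝ k).eval (n : ℝ) := by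
  have hpos : (ascPochhammer ℝ k).eval (n : ℝ) ≠ 0 :=
    (ascPochhammer_pos k _ (by positivity)).ne'
  unfold betaOp
  split_ifs with h0 h1
  · rcases k.eq_zero_or_pos with rfl | hk
    · simp
    · simp [h0, hk.ne']
  · simp [h1, hpos]
  have ha : 0 < n * x := mul_pos (by positivity) (hx.1.lt_of_ne' h0)
  have hb : 0 < n * (1 - x) := mul_pos (by positivity) (by linarith [hx.2.lt_of_ne h1])
  rw [integral_rpow_mul_one_sub_rpow_mul_pow ha hb, integral_rpow_mul_one_sub_rpow ha hb,
    show (n : ℝ) * x + n * (1 - x) = n by ring]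
  field_simp [(beta_pos ha hb).ne']

end BetaOp

section Stirling

lemma stirling2_eq_stirlingSecond : stirling2 = Nat.stirlingSecond := by
  funext j k
  induction j generalizing k with
  | zero => cases k <;> rfl
  | succ j ih =>
    cases k with
    | zero => rfl
    | succ k => rw [stirling2, Nat.stirlingSecond_succ_succ, ih, ih]

variable {R : Type*} [CommRing R]

theorem sum_stirlingSecond_mul_descPochhammer_eval (y : R) (j : ℕ) :
    ∑ k ∈ range (j + 1), (Nat.stirlingSecond j k : R) * (descPochhammer R k).eval y =
      y ^ j := by
  induction j with
  | zero => simp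
  | succ j ih =>
    set g : ℕ → R := fun k => k * Nat.stirlingSecond j k * (descPochhammer R k).eval y
    have hshift : ∑ k ∈ range (j + 1), g (k + 1) = ∑ k ∈ range (j + 1), g k := by
      have := Finset.sum_range_succ' g (j + 1)
      rw [Finset.sum_range_succ] at this
      simpa [g, Nat.stirlingSecond_eq_zero_of_lt] using this.symm
    calc ∑ k ∈ range (j + 2), (Nat.stirlingSecond (j + 1) k : R) * (descPochhammer R k).eval y
        = ∑ k ∈ range (j + 1), (g (k + 1) +
            Nat.stirlingSecond j k * (descPochhammer R (k + 1)).eval y) := by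
          rw [Finset.sum_range_succ', Nat.stirlingSecond_succ_zero, Nat.cast_zero, zero_mul,
            add_zero]
          refine Finset.sum_congr rfl fun k _ => ?_
          simp only [g, Nat.stirlingSecond_succ_succ]
          push_cast
          ring
      _ = ∑ k ∈ range (j + 1),
            (Nat.stirlingSecond j k : R) * (y * (descPochhammer R k).eval y) := by
          rw [Finset.sum_add_distrib, hshift, ← Finset.sum_add_distrib]
          refine Finset.sum_congr rfl fun k _ => ?_
          rw [descPochhammer_succ_eval]
          ring
      _ = y ^ (j + 1) := by
          simp only [mul_left_comm _ y, ← Finset.mul_sum, ih, pow_succ']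

theorem sum_neg_one_pow_mul_stirlingSecond_mul_ascPochhammer_eval (y : R) (j : ℕ) :
    ∑ k ∈ range (j + 1),
        (-1) ^ (j - k) * (Nat.stirlingSecond j k : R) * (ascPochhammer R k).eval y = y ^ j := by
  calc _ = (-1) ^ j * ∑ k ∈ range (j + 1),
          (Nat.stirlingSecond j k : R) * (descPochhammer R k).eval (-y) := by
        rw [Finset.mul_sum]
        refine Finset.sum_congr rfl fun k hk => ?_
        rw [← neg_neg y, ascPochhammer_eval_neg_eq_descPochhammer, neg_neg,
          ← pow_sub_mul_pow (-1 : R) (Nat.le_of_lt_succ (Finset.mem_range.1 hk))]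
        ring
    _ = y ^ j := by
        rw [sum_stirlingSecond_mul_descPochhammer_eval, ← mul_pow]
        simp

end Stirling

lemma Nat.cast_factorial_add_div_factorial {K : Type*} [Field K] [CharZero K] (m k : ℕ) :
    (Nat.factorial (m + k) : K) / Nat.factorial m =
      (ascPochhammer K k).eval ((m : K) + 1) := by
  rw [← Nat.factorial_mul_ascFactorial m k, Nat.cast_mul, Nat.cast_ascFactorial,
    mul_div_cancel_left₀ _ (Nat.cast_ne_zero.2 m.factorial_ne_zero)]
  push_cast
  rfl

/-- Explicit formula for `𝔅̄ₙ⁻¹ e_j` in terms of Stirling numbers of the second kind. -/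
theorem betaOp_inverse_monomial (n : ℕ) (hn : 1 ≤ n) (j : ℕ) :
    ∀ x ∈ Set.Icc (0:ℝ) 1,
      betaOp n (fun t => (1 / (n : ℝ) ^ j) *
          ∑ k ∈ Finset.range (j + 1),
            (-1 : ℝ) ^ (j - k) *
              ((Nat.factorial (n - 1 + k) : ℝ) / (Nat.factorial (n - 1) : ℝ)) *
              (stirling2 j k : ℝ) * t ^ k) x
        = x ^ j := by
  intro x hx
  have hn₀ : 0 < n := hn
  have hasc : ∀ k, (Nat.factorial (n - 1 + k) : ℝ) / Nat.factorial (n - 1) =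
      (ascPochhammer ℝ k).eval (n : ℝ) := fun k => by
    rw [Nat.cast_factorial_add_div_factorial, Nat.cast_pred hn₀, sub_add_cancel]
  simp only [hasc, stirling2_eq_stirlingSecond]
  rw [betaOp_const_mul, betaOp_finset_sum _ _ hn₀ hx fun k _ => by fun_prop]
  simp only [betaOp_const_mul, betaOp_pow hn₀ hx]
  calc _ = 1 / (n : ℝ) ^ j * ∑ k ∈ range (j + 1),
          (-1) ^ (j - k) * (Nat.stirlingSecond j k : ℝ) * (ascPochhammer ℝ k).eval (n * x) := by
        congr 1
        refine Finset.sum_congr rfl fun k _ => ?_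
        field_simp [(ascPochhammer_pos k (n : ℝ) (by positivity)).ne']
    _ = x ^ j := by
        rw [sum_neg_one_pow_mul_stirlingSecond_mul_ascPochhammer_eval, mul_pow]
        field_simp
end
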